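/- Every function of Class II on an open set ω ⊆ ℍ with ω ∩ ℝ = ∅ is of Class I on ω. -/

import Mathlib

open Quaternion

noncomputable section

/-- The quaternionic imaginary units. -/
def qI : ℍ[ℝ] := ⟨0, 1, 0, 0⟩
def qJ : ℍ[ℝ] := ⟨0, 0, 1, 0⟩
def qK : ℍ[ℝ] := ⟨0, 0, 0, 1⟩

/-- `ι(p) = Im p / |Im p|`. -/
def iota (p : ℍ[ℝ]) : ℍ[ℝ] := (‖p.im‖)⁻¹ • p.im

/-- The left Fueter operator `∂f/∂_l p̄`. -/
def fueterL (f : ℍ[ℝ] → ℍ[ℝ]) (p : ℍ[ℝ]) : ℍ[ℝ] :=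
  fderiv ℝ f p 1 + qI * fderiv ℝ f p qI + qJ * fderiv ℝ f p qJ + qK * fderiv ℝ f p qK

/-- The right Fueter operator `∂f/∂_r p̄`. -/
def fueterR (f : ℍ[ℝ] → ℍ[ℝ]) (p : ℍ[ℝ]) : ℍ[ℝ] :=
  fderiv ℝ f p 1 + fderiv ℝ f p qI * qI + fderiv ℝ f p qJ * qJ + fderiv ℝ f p qK * qK

/-- Spherical parametrization of the imaginary unit sphere. -/
def sph (α β : ℝ) : ℍ[ℝ] :=
  ⟨0, Real.cos α * Real.sin β, Real.sin α * Real.sin β, Real.cos β⟩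

/-- `∂ι/∂α`. -/
def sphA (α β : ℝ) : ℍ[ℝ] :=
  ⟨0, -(Real.sin α * Real.sin β), Real.cos α * Real.sin β, 0⟩

/-- `∂ι/∂β`. -/
def sphB (α β : ℝ) : ℍ[ℝ] :=
  ⟨0, Real.cos α * Real.cos β, Real.sin α * Real.cos β, -Real.sin β⟩

/-- Complex Extrinsic on ω. -/
def IsCE (f : ℍ[ℝ] → ℍ[ℝ]) (ω : Set ℍ[ℝ]) : Prop := ∀ p ∈ ω, f p * p = p * f p

/-- Class I : C¹, CE and `∂f/∂t + ι ∂f/∂r = 0`. -/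
def IsClassI (f : ℍ[ℝ] → ℍ[ℝ]) (ω : Set ℍ[ℝ]) : Prop :=
  ContDiffOn ℝ 1 f ω ∧ IsCE f ω ∧
  ∀ p ∈ ω, fderiv ℝ f p 1 + iota p * fderiv ℝ f p (iota p) = 0

/-- Class II with an explicit decomposition `f = u + ι v`. -/
def IsClassIIWith (f : ℍ[ℝ] → ℍ[ℝ]) (u v : ℍ[ℝ] → ℝ) (ω : Set ℍ[ℝ]) : Prop :=
  ContDiffOn ℝ 1 f ω ∧
  (∀ p ∈ ω, f p = (u p : ℍ[ℝ]) + (v p : ℍ[ℝ]) * iota p) ∧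
  ∀ p ∈ ω, fueterL f p = ((-2 * v p / ‖p.im‖ : ℝ) : ℍ[ℝ])

/-- (left-) Class II. -/
def IsClassII (f : ℍ[ℝ] → ℍ[ℝ]) (ω : Set ℍ[ℝ]) : Prop := ∃ u v, IsClassIIWith f u v ω

/-- right-Class II with an explicit decomposition. -/
def IsClassIIRWith (f : ℍ[ℝ] → ℍ[ℝ]) (u v : ℍ[ℝ] → ℝ) (ω : Set ℍ[ℝ]) : Prop :=
  ContDiffOn ℝ 1 f ω ∧
  (∀ p ∈ ω, f p = (u p : ℍ[ℝ]) + (v p : ℍ[ℝ]) * iota p) ∧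
  ∀ p ∈ ω, fueterR f p = ((-2 * v p / ‖p.im‖ : ℝ) : ℍ[ℝ])

/-- right-Class II. -/
def IsClassIIR (f : ℍ[ℝ] → ℍ[ℝ]) (ω : Set ℍ[ℝ]) : Prop := ∃ u v, IsClassIIRWith f u v ω

/-- Complex Intrinsic : `u`, `v` depend only on `(t, r)`. -/
def IsCI (f : ℍ[ℝ] → ℍ[ℝ]) (ω : Set ℍ[ℝ]) : Prop :=
  ∃ ut vt : ℝ → ℝ → ℝ, ∀ p ∈ ω,
    f p = (ut p.re ‖p.im‖ : ℍ[ℝ]) + (vt p.re ‖p.im‖ : ℍ[ℝ]) * iota p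

/-- Class III : Class I and CI. -/
def IsClassIII (f : ℍ[ℝ] → ℍ[ℝ]) (ω : Set ℍ[ℝ]) : Prop := IsClassI f ω ∧ IsCI f ω


/-! Write `f = u + v ι`. As `u = re f` and `v = -re (f ι)` near `p`, both are differentiable, and
the product rule splits `df = L + v dι`, where `L w = du w + dv w ι` takes values in the slice
`ℝ + ℝ ι`. The field `ι` is constant along `1` and along `ι`, and its Fueter sum is `-2 / r`; so
the Class II equation says exactly that the Fueter sum of `L` vanishes, while the Class I
expression for `f` reduces to `L 1 + ι L ι`. For a slice-valued `L` the real part and the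
`ι`-part of the vanishing Fueter sum are precisely the two components of `L 1 + ι L ι`. -/

open Filter Topology
open scoped RealInnerProductSpace

theorem HasFDerivAt.norm {E F : Type*} [NormedAddCommGroup E] [NormedSpace ℝ E]
    [NormedAddCommGroup F] [InnerProductSpace ℝ F] {f : E → F} {f' : E →L[ℝ] F} {x : E}
    (hf : HasFDerivAt f f' x) (h0 : f x ≠ 0) :
    HasFDerivAt (fun y => ‖f y‖) (‖f x‖⁻¹ • (innerSL ℝ (f x)).comp f') x := by
  have h := hf.norm_sq.sqrt (by positivity)
  simp only [Real.sqrt_sq (norm_nonneg _)] at h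
  convert h using 1
  ext w
  simp only [smul_apply, ContinuousLinearMap.comp_apply, coe_innerSL_apply, smul_eq_mul, one_div,
    mul_inv_rev, nsmul_eq_mul, Nat.cast_ofNat]
  field_simp

namespace Quaternion

def reCLM : ℍ[ℝ] →L[ℝ] ℝ := LinearMap.toContinuousLinearMap (QuaternionAlgebra.reₗ _ _ _)

def imCLM : ℍ[ℝ] →L[ℝ] ℍ[ℝ] :=
  LinearMap.toContinuousLinearMap
    { toFun := fun q => q.im, map_add' := im_add, map_smul' := fun c q => im_smul q c }

@[simp] lemma reCLM_apply (q : ℍ[ℝ]) : reCLM q = q.re := rfl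

@[simp] lemma imCLM_apply (q : ℍ[ℝ]) : imCLM q = q.im := rfl

lemma norm_im_sq (q : ℍ[ℝ]) : ‖q.im‖ ^ 2 = q.imI ^ 2 + q.imJ ^ 2 + q.imK ^ 2 := by
  rw [sq, ← normSq_eq_norm_mul_self, normSq_def']
  simp

end Quaternion

@[simp] lemma re_qI : qI.re = 0 := rfl
@[simp] lemma imI_qI : qI.imI = 1 := rfl
@[simp] lemma imJ_qI : qI.imJ = 0 := rfl
@[simp] lemma imK_qI : qI.imK = 0 := rfl
@[simp] lemma re_qJ : qJ.re = 0 := rfl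
@[simp] lemma imI_qJ : qJ.imI = 0 := rfl
@[simp] lemma imJ_qJ : qJ.imJ = 1 := rfl
@[simp] lemma imK_qJ : qJ.imK = 0 := rfl
@[simp] lemma re_qK : qK.re = 0 := rfl
@[simp] lemma imI_qK : qK.imI = 0 := rfl
@[simp] lemma imJ_qK : qK.imJ = 0 := rfl
@[simp] lemma imK_qK : qK.imK = 1 := rfl

lemma eq_smul_qI_add_smul_qJ_add_smul_qK {q : ℍ[ℝ]} (hq : q.re = 0) :
    q = q.imI • qI + q.imJ • qJ + q.imK • qK := by
  ext <;> simp [hq]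

lemma iota_re (p : ℍ[ℝ]) : (iota p).re = 0 := by simp [iota]

lemma iota_mul_self {p : ℍ[ℝ]} (hp : p.im ≠ 0) : iota p * iota p = -1 := by
  have hr : ‖p.im‖ ≠ 0 := norm_ne_zero_iff.mpr hp
  rw [iota, smul_mul_smul_comm, ← sq p.im, im_sq, normSq_eq_norm_mul_self, smul_neg,
    ← coe_smul, smul_eq_mul, neg_inj, ← coe_one]
  congr 1
  field_simp

lemma commute_iota_self (p : ℍ[ℝ]) : Commute (iota p) p := by
  refine Commute.smul_left ?_ _
  conv_rhs => rw [← re_add_im p]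
  exact (coe_commute _ _).symm.add_right (Commute.refl _)

lemma hasFDerivAt_iota {p : ℍ[ℝ]} (hp : p.im ≠ 0) :
    HasFDerivAt iota (‖p.im‖⁻¹ • imCLM
      + (-(‖p.im‖ ^ 2)⁻¹ • ‖p.im‖⁻¹ • (innerSL ℝ p.im).comp imCLM).smulRight p.im) p :=
  ((hasDerivAt_inv (norm_ne_zero_iff.mpr hp)).comp_hasFDerivAt p
    ((imCLM.hasFDerivAt (x := p)).norm hp)).smul imCLM.hasFDerivAt

lemma fderiv_iota_apply {p : ℍ[ℝ]} (hp : p.im ≠ 0) (w : ℍ[ℝ]) :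
    fderiv ℝ iota p w = ‖p.im‖⁻¹ • w.im - (⟪p.im, w.im⟫ / ‖p.im‖ ^ 3) • p.im := by
  rw [(hasFDerivAt_iota hp).fderiv, sub_eq_add_neg, ← neg_smul]
  simp only [add_apply, smul_apply, ContinuousLinearMap.smulRight_apply,
    ContinuousLinearMap.comp_apply, innerSL_apply_apply, imCLM_apply, smul_eq_mul]
  congr 2
  ring

lemma fderiv_iota_one {p : ℍ[ℝ]} (hp : p.im ≠ 0) : fderiv ℝ iota p 1 = 0 := by
  simp [fderiv_iota_apply hp]

lemma fderiv_iota_iota {p : ℍ[ℝ]} (hp : p.im ≠ 0) : fderiv ℝ iota p (iota p) = 0 := by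
  have hr : ‖p.im‖ ≠ 0 := norm_ne_zero_iff.mpr hp
  rw [fderiv_iota_apply hp, iota, im_smul, im_idem, inner_smul_right, real_inner_self_eq_norm_sq,
    smul_smul, sub_eq_zero]
  congr 1
  field_simp

def fueterₗ : (ℍ[ℝ] →L[ℝ] ℍ[ℝ]) →ₗ[ℝ] ℍ[ℝ] where
  toFun L := L 1 + qI * L qI + qJ * L qJ + qK * L qK
  map_add' L M := by simp only [add_apply, mul_add]; abel
  map_smul' c L := by simp only [smul_apply, mul_smul_comm, smul_add, RingHom.id_apply]

lemma fueterL_eq_fueterₗ_fderiv (f : ℍ[ℝ] → ℍ[ℝ]) (p : ℍ[ℝ]) :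
    fueterL f p = fueterₗ (fderiv ℝ f p) := rfl

lemma fueterₗ_fderiv_iota {p : ℍ[ℝ]} (hp : p.im ≠ 0) :
    fueterₗ (fderiv ℝ iota p) = ((-2 / ‖p.im‖ : ℝ) : ℍ[ℝ]) := by
  have hr : ‖p.im‖ ≠ 0 := norm_ne_zero_iff.mpr hp
  have hr2 := norm_im_sq p
  simp only [fueterₗ, LinearMap.coe_mk, AddHom.coe_mk, fderiv_iota_apply hp]
  ext <;> simp only [re_coe, imI_coe, imJ_coe, imK_coe] <;> simp [inner_def] <;> field_simp
  · linear_combination -hr2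
  all_goals ring

lemma add_mul_apply_eq_zero_of_fueterₗ_eq_zero {ι : ℍ[ℝ]} (hre : ι.re = 0) (hsq : ι * ι = -1)
    (L : ℍ[ℝ] →L[ℝ] ℍ[ℝ]) (hL : ∀ w, ∃ a b : ℝ, L w = a + b * ι) (h : fueterₗ L = 0) :
    L 1 + ι * L ι = 0 := by
  obtain ⟨a₀, b₀, h₀⟩ := hL 1
  obtain ⟨a₁, b₁, h₁⟩ := hL qI
  obtain ⟨a₂, b₂, h₂⟩ := hL qJ
  obtain ⟨a₃, b₃, h₃⟩ := hL qK
  have hn : ι.imI ^ 2 + ι.imJ ^ 2 + ι.imK ^ 2 = 1 := by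
    have := congrArg QuaternionAlgebra.re hsq
    simp only [re_mul, hre, mul_zero, zero_sub, re_neg, re_one] at this
    linear_combination -this
  have hLι : L ι = ι.imI • L qI + ι.imJ • L qJ + ι.imK • L qK := by
    conv_lhs => rw [eq_smul_qI_add_smul_qJ_add_smul_qK hre]
    simp only [map_add, map_smul]
  change L 1 + qI * L qI + qJ * L qJ + qK * L qK = 0 at h
  rw [h₀, h₁, h₂, h₃] at h
  rw [hLι, h₀, h₁, h₂, h₃]
  have e₀ := congrArg QuaternionAlgebra.re h
  have e₁ := congrArg QuaternionAlgebra.imI h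
  have e₂ := congrArg QuaternionAlgebra.imJ h
  have e₃ := congrArg QuaternionAlgebra.imK h
  simp [hre] at e₀ e₁ e₂ e₃
  set x := ι.imI
  set y := ι.imJ
  set z := ι.imK
  ext <;> simp [hre]
  · linear_combination e₀ - (b₁ * x + b₂ * y + b₃ * z) * hn
  · linear_combination x * (x * e₁ + y * e₂ + z * e₃) - b₀ * x * hn
  · linear_combination y * (x * e₁ + y * e₂ + z * e₃) - b₀ * y * hn
  · linear_combination z * (x * e₁ + y * e₂ + z * e₃) - b₀ * z * hn

lemma re_coe_add_coe_mul_iota (a b : ℝ) (q : ℍ[ℝ]) : ((a : ℍ[ℝ]) + b * iota q).re = a := by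
  simp [coe_mul_eq_smul, iota_re]

lemma re_coe_add_coe_mul_iota_mul_iota (a b : ℝ) {q : ℍ[ℝ]} (hq : q.im ≠ 0) :
    (((a : ℍ[ℝ]) + b * iota q) * iota q).re = -b := by
  rw [add_mul, mul_assoc, iota_mul_self hq]
  simp [coe_mul_eq_smul, iota_re]

lemma differentiableAt_coeffs_of_eventuallyEq {f : ℍ[ℝ] → ℍ[ℝ]} {u v : ℍ[ℝ] → ℝ} {p : ℍ[ℝ]}
    (hf : DifferentiableAt ℝ f p) (hp : p.im ≠ 0)
    (hdec : ∀ᶠ q in 𝓝 p, f q = (u q : ℍ[ℝ]) + (v q : ℍ[ℝ]) * iota q) :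
    DifferentiableAt ℝ u p ∧ DifferentiableAt ℝ v p := by
  have him : ∀ᶠ q in 𝓝 p, q.im ≠ 0 := continuous_im.continuousAt.eventually_ne hp
  constructor
  · refine (reCLM.differentiableAt.comp p hf).congr_of_eventuallyEq ?_
    filter_upwards [hdec] with q hq
    rw [Function.comp_apply, reCLM_apply, hq, re_coe_add_coe_mul_iota]
  · refine (reCLM.differentiableAt.comp p (hf.mul (hasFDerivAt_iota hp).differentiableAt)).neg
      |>.congr_of_eventuallyEq ?_
    filter_upwards [hdec, him] with q hq hqim
    show v q = -(f q * iota q).re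
    rw [hq, re_coe_add_coe_mul_iota_mul_iota _ _ hqim, neg_neg]

lemma hasFDerivAt_coe_add_coe_mul_iota {u v : ℍ[ℝ] → ℝ} {u' v' : ℍ[ℝ] →L[ℝ] ℝ} {p : ℍ[ℝ]}
    (hu : HasFDerivAt u u' p) (hv : HasFDerivAt v v' p) (hp : p.im ≠ 0) :
    HasFDerivAt (fun q => (u q : ℍ[ℝ]) + (v q : ℍ[ℝ]) * iota q)
      (u'.smulRight 1 + v'.smulRight (iota p) + v p • fderiv ℝ iota p) p := by
  have hfun : (fun q => (u q : ℍ[ℝ]) + (v q : ℍ[ℝ]) * iota q)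
      = fun q => u q • (1 : ℍ[ℝ]) + v q • iota q := by
    funext q
    ext <;> simp
  rw [hfun, add_assoc, add_comm (v'.smulRight _)]
  exact (hu.smul_const 1).add (hv.smul (hasFDerivAt_iota hp).differentiableAt.hasFDerivAt)

/-- Class II ⊆ Class I. -/
theorem stmt6 (ω : Set ℍ[ℝ]) (hω : IsOpen ω) (hIm : ∀ p ∈ ω, p.im ≠ 0)
    (f : ℍ[ℝ] → ℍ[ℝ]) (hf : IsClassII f ω) :
    IsClassI f ω := by
  obtain ⟨u, v, hC1, hdec, hfueter⟩ := hf
  refine ⟨hC1, fun p hp => ?_, fun p hp => ?_⟩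
  · rw [hdec p hp]
    exact ((coe_commute _ _).add_left ((coe_commute _ _).mul_left (commute_iota_self p))).eq
  have hpω : ω ∈ 𝓝 p := hω.mem_nhds hp
  have hp0 : p.im ≠ 0 := hIm p hp
  have hf_eq : f =ᶠ[𝓝 p] fun q => (u q : ℍ[ℝ]) + (v q : ℍ[ℝ]) * iota q :=
    eventually_of_mem hpω hdec
  obtain ⟨hu, hv⟩ := differentiableAt_coeffs_of_eventuallyEq
    ((hC1.contDiffAt hpω).differentiableAt one_ne_zero) hp0 hf_eq
  set L := (fderiv ℝ u p).smulRight (1 : ℍ[ℝ]) + (fderiv ℝ v p).smulRight (iota p)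
  have hDf : fderiv ℝ f p = L + v p • fderiv ℝ iota p :=
    ((hasFDerivAt_coe_add_coe_mul_iota hu.hasFDerivAt hv.hasFDerivAt hp0).congr_of_eventuallyEq
      hf_eq).fderiv
  have hL : fueterₗ L = 0 := by
    have h := hfueter p hp
    rw [fueterL_eq_fueterₗ_fderiv, hDf, map_add, map_smul, fueterₗ_fderiv_iota hp0, ← coe_smul,
      smul_eq_mul, mul_div_assoc', mul_comm (v p), add_eq_right] at h
    exact h
  have hL_slice : ∀ w, ∃ a b : ℝ, L w = a + b * iota p :=
    fun w => ⟨fderiv ℝ u p w, fderiv ℝ v p w, by ext <;> simp [L]⟩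
  rw [hDf]
  simp only [add_apply, smul_apply, fderiv_iota_one hp0, fderiv_iota_iota hp0, smul_zero, add_zero]
  exact add_mul_apply_eq_zero_of_fueterₗ_eq_zero (iota_re p) (iota_mul_self hp0) L hL_slice hL
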